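/- For the weighted efficiency gap with excess-vote weight λ > 0, under equal turnout, EG_λ = S_m - (1+λ)·V_m. -/

import Mathlib

/-!
Since `V_i^B = t - V_i^A` with `t = V / n`, each district contributes
`W_i^B - W_i^A = t·[A wins i] + λ t / 2 - (1 + λ) V_i^A`, which is affine in `V_i^A`; summing over
the districts and dividing by `V = n t` gives `S_m - (1 + λ) V_m`.
-/

open Finset

/-- The paper's `W_i^P(λ)` for a party `P` with `own` votes against `other` in a district of
turnout `t`. -/
noncomputable def wastedVotes (lam t own other : ℝ) : ℝ :=
  if other < own then lam * (own - t / 2) else own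

lemma wastedVotes_sub_wastedVotes {lam t a b : ℝ} (hab : a + b = t) (hne : a ≠ b) :
    wastedVotes lam t b a - wastedVotes lam t a b
      = (if b < a then t else 0) + lam * t / 2 - (1 + lam) * a := by
  have hb : b = t - a := by linarith
  rcases hne.lt_or_gt with hlt | hgt
  · simp only [wastedVotes, if_pos hlt, if_neg hlt.not_gt]
    rw [hb]; ring
  · simp only [wastedVotes, if_pos hgt, if_neg hgt.not_gt]
    rw [hb]; ring

lemma sum_wastedVotes_sub_sum_wastedVotes {ι : Type*} [Fintype ι] {lam t : ℝ} {a b : ι → ℝ}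
    (hab : ∀ i, a i + b i = t) (hne : ∀ i, a i ≠ b i) :
    ∑ i, wastedVotes lam t (b i) (a i) - ∑ i, wastedVotes lam t (a i) (b i)
      = #{i | b i < a i} * t + Fintype.card ι * (lam * t / 2) - (1 + lam) * ∑ i, a i := by
  rw [← sum_sub_distrib, sum_congr rfl fun i _ => wastedVotes_sub_wastedVotes (hab i) (hne i),
    sum_sub_distrib, sum_add_distrib, ← sum_filter, sum_const, sum_const, card_univ, mul_sum,
    nsmul_eq_mul, nsmul_eq_mul]

theorem weighted_efficiency_gap_formula_general
    (n : ℕ) (hn : 0 < n) (V : ℝ) (hV : 0 < V) (lam : ℝ)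
    (VA VB : Fin n → ℝ)
    (hturnout : ∀ i, VA i + VB i = V / n)
    (hnotie : ∀ i, VA i ≠ VB i) :
    let WA : ℝ := ∑ i, (if VB i < VA i then lam * (VA i - V / n / 2) else VA i)
    let WB : ℝ := ∑ i, (if VA i < VB i then lam * (VB i - V / n / 2) else VB i)
    let Sm : ℝ := ((Finset.univ.filter fun i => VB i < VA i).card : ℝ) / n - 1 / 2
    let Vm : ℝ := (∑ i, VA i) / V - 1 / 2
    (WB - WA) / V = Sm - (1 + lam) * Vm := by
  intro WA WB Sm Vm
  have hWB_sub_WA : WB - WA = ∑ i, wastedVotes lam (V / n) (VB i) (VA i)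
      - ∑ i, wastedVotes lam (V / n) (VA i) (VB i) := rfl
  have hn' : (n : ℝ) ≠ 0 := Nat.cast_ne_zero.mpr hn.ne'
  rw [hWB_sub_WA, sum_wastedVotes_sub_sum_wastedVotes hturnout hnotie, Fintype.card_fin]
  simp only [Sm, Vm]
  field_simp
  ring

/-- Nagle's weighted efficiency gap formula: under equal turnout,
`EG_λ = S_m - (1 + λ) * V_m`. -/
theorem weighted_efficiency_gap_formula
    (n : ℕ) (hn : 0 < n) (V : ℝ) (hV : 0 < V) (lam : ℝ) (hlam : 0 < lam)
    (VA VB : Fin n → ℝ)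
    (hnonnegA : ∀ i, 0 ≤ VA i) (hnonnegB : ∀ i, 0 ≤ VB i)
    (hturnout : ∀ i, VA i + VB i = V / n)
    (hnotie : ∀ i, VA i ≠ VB i) :
    let WA : ℝ := ∑ i, (if VB i < VA i then lam * (VA i - V / n / 2) else VA i)
    let WB : ℝ := ∑ i, (if VA i < VB i then lam * (VB i - V / n / 2) else VB i)
    let Sm : ℝ := ((Finset.univ.filter fun i => VB i < VA i).card : ℝ) / n - 1 / 2
    let Vm : ℝ := (∑ i, VA i) / V - 1 / 2
    (WB - WA) / V = Sm - (1 + lam) * Vm :=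
  weighted_efficiency_gap_formula_general n hn V hV lam VA VB hturnout hnotie
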